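/- arXiv:2512.15485 — 5 statements merged into one kernel-verified Lean document; each statement's English description precedes it below -/
import Mathlib

section
/- Let A be a midpoint algebra in Set, i.e. a set with a binary operation m satisfying idempotency m(a,a)=a, commutativity m(a,b)=m(b,a), and the medial law m(m(a,b),m(c,d))=m(m(a,c),m(b,d)). Suppose A is iterable: for every set X and every map s : X → X × A there is a unique u : X → A with u(x) = m(u(s(x).1), s(x).2) for all x. Then for any two points a₀, a₁ ∈ A there exists a unique midpoint homomorphism f : [0,1] → A with f(0) = a₀ and f(1) = a₁, where [0,1] carries the midpoint operation m(x,y) = (x+y)/2. -/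
/-- A midpoint algebra: a set with a binary operation that is idempotent,
commutative, and medial. -/
structure MidpointAlg (A : Type) where
  m : A → A → A
  idem : ∀ a, m a a = a
  comm : ∀ a b, m a b = m b a
  medial : ∀ a b c d, m (m a b) (m c d) = m (m a c) (m b d)

/-- A midpoint algebra is iterable if every map `s : X → X × A` admits a unique
iteration `u : X → A` with `u x = m (u (s x).1) (s x).2`. -/
def MidpointAlg.Iterable {A : Type} (M : MidpointAlg A) : Prop :=
  ∀ (X : Type) (s : X → X × A), ∃! u : X → A, ∀ x, u x = M.m (u (s x).1) (s x).2

/-- The midpoint operation on the unit interval `[0,1]`. -/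
noncomputable def midI (x y : Set.Icc (0:ℝ) 1) : Set.Icc (0:ℝ) 1 :=
  ⟨(x.1 + y.1) / 2, ⟨by nlinarith [x.2.1, y.2.1], by nlinarith [x.2.2, y.2.2]⟩⟩

/-- Tail map for binary expansion on [0,1]. -/
noncomputable def ivTl (x : Set.Icc (0:ℝ) 1) : Set.Icc (0:ℝ) 1 :=
  if h : x.1 ≤ 1/2 then ⟨2 * x.1, ⟨by nlinarith [x.2.1], by nlinarith⟩⟩
  else ⟨2 * x.1 - 1, ⟨by push_neg at h; nlinarith, by nlinarith [x.2.2]⟩⟩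

/-- First binary digit. -/
noncomputable def ivBit (x : Set.Icc (0:ℝ) 1) : ℝ := if x.1 ≤ 1/2 then 0 else 1

/-- Binary digit stream of a point of [0,1]. -/
noncomputable def ivDig (x : Set.Icc (0:ℝ) 1) (n : ℕ) : ℝ := ivBit (ivTl^[n] x)

lemma ivDig_mem (x : Set.Icc (0:ℝ) 1) (n : ℕ) : ivDig x n = 0 ∨ ivDig x n = 1 := by
  unfold ivDig ivBit; split <;> simp

lemma ivDig_succ (x : Set.Icc (0:ℝ) 1) (n : ℕ) : ivDig x (n + 1) = ivDig (ivTl x) n := by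
  unfold ivDig; rw [Function.iterate_succ_apply]

/-- Value of a digit stream. -/
noncomputable def sVal (c : ℕ → ℝ) : ℝ := ∑' n, c n / 2 ^ (n + 1)

lemma half_pow (n : ℕ) : (1:ℝ) / 2 / 2 ^ n = 1 / 2 ^ (n+1) := by rw [pow_succ]; ring

lemma sVal_summable {c : ℕ → ℝ} (h0 : ∀ n, 0 ≤ c n) (h1 : ∀ n, c n ≤ 1) :
    Summable (fun n => c n / 2 ^ (n + 1)) := by
  apply Summable.of_nonneg_of_le (fun n => div_nonneg (h0 n) (by positivity))
    (fun n => ?_) (summable_geometric_two' 1)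
  rw [half_pow]
  have hp : (0:ℝ) < 2 ^ (n+1) := by positivity
  exact (div_le_div_iff_of_pos_right hp).mpr (h1 n)

lemma sVal_nonneg {c : ℕ → ℝ} (h0 : ∀ n, 0 ≤ c n) : 0 ≤ sVal c :=
  tsum_nonneg (fun n => div_nonneg (h0 n) (by positivity))

lemma sVal_le_one {c : ℕ → ℝ} (h0 : ∀ n, 0 ≤ c n) (h1 : ∀ n, c n ≤ 1) : sVal c ≤ 1 := by
  have key : sVal c ≤ ∑' n : ℕ, (1:ℝ) / 2 / 2 ^ n := by
    apply Summable.tsum_le_tsum (fun n => ?_) (sVal_summable h0 h1) (summable_geometric_two' 1)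
    rw [half_pow]
    have hp : (0:ℝ) < 2 ^ (n+1) := by positivity
    exact (div_le_div_iff_of_pos_right hp).mpr (h1 n)
  calc sVal c ≤ _ := key
    _ = 1 := tsum_geometric_two' 1

lemma sVal_cons {c : ℕ → ℝ} (h0 : ∀ n, 0 ≤ c n) (h1 : ∀ n, c n ≤ 1) :
    sVal c = (c 0 + sVal (fun n => c (n + 1))) / 2 := by
  have hs := sVal_summable h0 h1
  unfold sVal
  rw [Summable.tsum_eq_zero_add hs]
  have h2 : ∀ n : ℕ, c (n+1) / 2 ^ (n+1+1) = (c (n+1) / 2 ^ (n+1)) / 2 := by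
    intro n; rw [pow_succ]; ring
  simp_rw [h2]
  rw [tsum_div_const]
  ring

lemma sVal_avg {c d : ℕ → ℝ} (hc0 : ∀ n, 0 ≤ c n) (hc1 : ∀ n, c n ≤ 1)
    (hd0 : ∀ n, 0 ≤ d n) (hd1 : ∀ n, d n ≤ 1) :
    sVal (fun n => (c n + d n) / 2) = (sVal c + sVal d) / 2 := by
  unfold sVal
  have h2 : ∀ n : ℕ, (c n + d n) / 2 / 2 ^ (n+1)
      = c n / 2 ^ (n+1) / 2 + d n / 2 ^ (n+1) / 2 := fun n => by ring
  simp_rw [h2]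
  rw [Summable.tsum_add ((sVal_summable hc0 hc1).div_const 2) ((sVal_summable hd0 hd1).div_const 2),
    tsum_div_const, tsum_div_const]
  ring

lemma ivTl_step (y : Set.Icc (0:ℝ) 1) : 2 * y.1 = ivBit y + (ivTl y).1 := by
  unfold ivBit ivTl
  by_cases h : y.1 ≤ 1/2
  · rw [if_pos h, dif_pos h]; ring
  · rw [if_neg h, dif_neg h]; ring

lemma sVal_partial (x : Set.Icc (0:ℝ) 1) (n : ℕ) :
    x.1 = (∑ k ∈ Finset.range n, ivDig x k / 2 ^ (k+1)) + (ivTl^[n] x).1 / 2 ^ n := by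
  induction n with
  | zero => simp
  | succ n ih =>
    rw [Finset.sum_range_succ]
    have hstep := ivTl_step (ivTl^[n] x)
    rw [Function.iterate_succ_apply']
    have : (ivTl^[n] x).1 / 2 ^ n
        = ivDig x n / 2 ^ (n+1) + (ivTl (ivTl^[n] x)).1 / 2 ^ (n+1) := by
      unfold ivDig
      rw [pow_succ, ← add_div, div_eq_div_iff (by positivity) (by positivity)]
      linear_combination hstep * (2:ℝ) ^ n
    linarith [ih, this]

lemma sVal_dig (x : Set.Icc (0:ℝ) 1) : sVal (ivDig x) = x.1 := by
  have h0 : ∀ n, 0 ≤ ivDig x n := fun n => by rcases ivDig_mem x n with h | h <;> rw [h] <;> norm_num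
  have h1 : ∀ n, ivDig x n ≤ 1 := fun n => by rcases ivDig_mem x n with h | h <;> rw [h] <;> norm_num
  have hs := sVal_summable h0 h1
  have htend : Filter.Tendsto (fun n => ∑ k ∈ Finset.range n, ivDig x k / 2 ^ (k+1))
      Filter.atTop (nhds x.1) := by
    have heq : ∀ n, ∑ k ∈ Finset.range n, ivDig x k / 2 ^ (k+1)
        = x.1 - (ivTl^[n] x).1 / 2 ^ n := fun n => by linarith [sVal_partial x n]
    simp_rw [heq]
    have h0' : Filter.Tendsto (fun n : ℕ => (ivTl^[n] x).1 / 2 ^ n) Filter.atTop (nhds 0) := by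
      apply squeeze_zero (fun n => div_nonneg (ivTl^[n] x).2.1 (by positivity))
        (g := fun n : ℕ => (1/2 : ℝ) ^ n)
      · intro n
        rw [div_pow, one_pow]
        have hp : (0:ℝ) < 2 ^ n := by positivity
        exact (div_le_div_iff_of_pos_right hp).mpr (ivTl^[n] x).2.2
      · exact tendsto_pow_atTop_nhds_zero_of_lt_one (by norm_num) (by norm_num)
    have := Filter.Tendsto.const_sub x.1 h0'
    simpa using this
  exact ((hs.hasSum_iff_tendsto_nat).mpr htend).tsum_eq


/-- Interpretation of a digit in {0, 1/2, 1} in a midpoint algebra. -/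
noncomputable def digElem {A : Type} (M : MidpointAlg A) (a₀ a₁ : A) (r : ℝ) : A :=
  if r = 0 then a₀ else if r = 1 then a₁ else M.m a₀ a₁

lemma digElem_zero {A : Type} (M : MidpointAlg A) (a₀ a₁ : A) : digElem M a₀ a₁ 0 = a₀ := if_pos rfl

lemma digElem_one {A : Type} (M : MidpointAlg A) (a₀ a₁ : A) : digElem M a₀ a₁ 1 = a₁ := by
  unfold digElem; norm_num

lemma digElem_half {A : Type} (M : MidpointAlg A) (a₀ a₁ : A) :
    digElem M a₀ a₁ (1/2) = M.m a₀ a₁ := by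
  unfold digElem; norm_num

lemma dmem_nonneg {r : ℝ} (h : r = 0 ∨ r = 1/2 ∨ r = 1) : 0 ≤ r := by
  rcases h with h | h | h <;> rw [h] <;> norm_num

lemma dmem_le_one {r : ℝ} (h : r = 0 ∨ r = 1/2 ∨ r = 1) : r ≤ 1 := by
  rcases h with h | h | h <;> rw [h] <;> norm_num

/-- The unit interval with the midpoint operation `(x+y)/2` is the free iterable
midpoint algebra on two generators: for any iterable midpoint algebra `A` and
points `a₀ a₁`, there is a unique midpoint homomorphism `[0,1] → A` sending
`0 ↦ a₀` and `1 ↦ a₁`. -/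
theorem interval_free_iterable_midpoint_algebra
    (A : Type) (M : MidpointAlg A) (hA : M.Iterable) (a₀ a₁ : A) :
    ∃! f : Set.Icc (0:ℝ) 1 → A,
      (∀ x y, f (midI x y) = M.m (f x) (f y)) ∧
      f ⟨0, by norm_num⟩ = a₀ ∧ f ⟨1, by norm_num⟩ = a₁ := by
  classical
  set I := Set.Icc (0:ℝ) 1 with hI
  -- the infinite midpoint operator on streams
  obtain ⟨S, hS, hSuniq⟩ := hA (ℕ → A) (fun α => (fun n => α (n + 1), α 0))
  simp only at hS hSuniq
  -- the candidate map, via iteration on the interval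
  obtain ⟨u, hu, huuniq⟩ := hA (Set.Icc (0:ℝ) 1)
    (fun x => (ivTl x, if x.1 ≤ 1/2 then a₀ else a₁))
  simp only at hu huuniq
  -- fixed points of b-iteration are b
  have hfix : ∀ b v : A, v = M.m v b → v = b := by
    intro b v hv
    obtain ⟨w, hw, hwuniq⟩ := hA PUnit (fun _ => (PUnit.unit, b))
    have h1 : (fun _ : PUnit => v) = w := hwuniq _ (fun _ => hv)
    have h2 : (fun _ : PUnit => b) = w := hwuniq _ (fun _ => (M.idem b).symm)
    have := h1.trans h2.symm
    exact congrFun this PUnit.unit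
  -- endpoints
  have hu0 : u ⟨0, by norm_num⟩ = a₀ := by
    apply hfix
    have h1 := hu ⟨0, by norm_num⟩
    have h2 : ivTl ⟨0, by norm_num⟩ = ⟨0, by norm_num⟩ := by
      apply Subtype.ext
      simp [ivTl]
    rw [h2] at h1
    simpa using h1
  have hu1 : u ⟨1, by norm_num⟩ = a₁ := by
    apply hfix
    have h1 := hu ⟨1, by norm_num⟩
    have h2 : ivTl ⟨1, by norm_num⟩ = ⟨1, by norm_num⟩ := by
      apply Subtype.ext
      simp [ivTl]
      norm_num
    rw [h2] at h1
    have h3 : ¬ ((1:ℝ) ≤ 1/2) := by norm_num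
    rw [if_neg h3] at h1
    exact h1
  -- step equations
  have eq0 : ∀ z w : Set.Icc (0:ℝ) 1, z.1 ≤ 1/2 → w.1 = 2 * z.1 →
      u z = M.m (u w) a₀ := by
    intro z w hz hw
    have h2 : ivTl z = w := by
      apply Subtype.ext
      unfold ivTl
      rw [dif_pos hz]
      exact hw.symm
    have h1 := hu z
    rw [h2, if_pos hz] at h1
    exact h1
  have eq1 : ∀ z w : Set.Icc (0:ℝ) 1, 1/2 ≤ z.1 → w.1 = 2 * z.1 - 1 →
      u z = M.m (u w) a₁ := by
    intro z w hz hw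
    rcases eq_or_lt_of_le hz with hz' | hz'
    · -- z = 1/2, w = 0
      have hzz : z = ⟨1/2, by norm_num⟩ := Subtype.ext hz'.symm
      have hww : w = ⟨0, by norm_num⟩ := Subtype.ext (by rw [hw, ← hz']; norm_num)
      rw [hzz, hww, hu0]
      have := eq0 ⟨1/2, by norm_num⟩ ⟨1, by norm_num⟩ (by norm_num) (by norm_num)
      rw [this, hu1, M.comm]
    · have h2 : ivTl z = w := by
        apply Subtype.ext
        unfold ivTl
        rw [dif_neg (not_le.mpr hz')]
        exact hw.symm
      have h1 := hu z
      rw [h2, if_neg (not_le.mpr hz')] at h1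
      exact h1
  -- the half-digit step equation
  have eqh : ∀ z w : Set.Icc (0:ℝ) 1, 1/4 ≤ z.1 → z.1 ≤ 3/4 → w.1 = 2 * z.1 - 1/2 →
      u z = M.m (u w) (M.m a₀ a₁) := by
    intro z w hz1 hz2 hw
    by_cases hz : z.1 ≤ 1/2
    · have hv : (4 * z.1 - 1) ∈ Set.Icc (0:ℝ) 1 := ⟨by linarith, by linarith⟩
      set v : Set.Icc (0:ℝ) 1 := ⟨4 * z.1 - 1, hv⟩ with hvdef
      have hz2mem : (2 * z.1) ∈ Set.Icc (0:ℝ) 1 := ⟨by linarith [z.2.1], by linarith⟩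
      have huz : u z = M.m (M.m (u v) a₁) a₀ := by
        rw [eq0 z ⟨2 * z.1, hz2mem⟩ hz rfl,
          eq1 ⟨2 * z.1, hz2mem⟩ v (by simpa using by linarith : 1/2 ≤ (2*z.1)) (by simp; ring)]
      have huw : u w = M.m (u v) a₀ := by
        apply eq0 w v (by rw [hw]; linarith) (by rw [hw]; ring)
      rw [huz, huw, M.comm a₀ a₁, M.medial, M.idem]
    · push_neg at hz
      have hv : (4 * z.1 - 2) ∈ Set.Icc (0:ℝ) 1 := ⟨by linarith, by linarith⟩
      set v : Set.Icc (0:ℝ) 1 := ⟨4 * z.1 - 2, hv⟩ with hvdef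
      have hz2mem : (2 * z.1 - 1) ∈ Set.Icc (0:ℝ) 1 := ⟨by linarith, by linarith [z.2.2]⟩
      have huz : u z = M.m (M.m (u v) a₀) a₁ := by
        rw [eq1 z ⟨2 * z.1 - 1, hz2mem⟩ (le_of_lt hz) rfl,
          eq0 ⟨2 * z.1 - 1, hz2mem⟩ v (by simp; linarith) (by simp; ring)]
      have huw : u w = M.m (u v) a₁ := by
        apply eq1 w v (by rw [hw]; linarith) (by rw [hw]; ring)
      rw [huz, huw, M.medial, M.idem]
  -- u computed from digit streams
  have hSdig : ∀ x : Set.Icc (0:ℝ) 1, u x = S (fun n => digElem M a₀ a₁ (ivDig x n)) := by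
    have hF : ∀ x : Set.Icc (0:ℝ) 1,
        S (fun n => digElem M a₀ a₁ (ivDig x n))
          = M.m (S (fun n => digElem M a₀ a₁ (ivDig (ivTl x) n)))
            (if x.1 ≤ 1/2 then a₀ else a₁) := by
      intro x
      have h1 := hS (fun n => digElem M a₀ a₁ (ivDig x n))
      have h2 : (fun n => digElem M a₀ a₁ (ivDig x (n + 1)))
          = fun n => digElem M a₀ a₁ (ivDig (ivTl x) n) := by
        funext n; rw [ivDig_succ]
      rw [h2] at h1
      have h3 : digElem M a₀ a₁ (ivDig x 0) = if x.1 ≤ 1/2 then a₀ else a₁ := by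
        unfold ivDig ivBit
        simp only [Function.iterate_zero, id_eq]
        by_cases hx : x.1 ≤ 1/2
        · rw [if_pos hx]; simp only [hx, if_true, digElem_zero]
        · rw [if_neg hx]; simp only [hx, if_false, digElem_one]
      rw [h3] at h1
      exact h1
    have := huuniq _ hF
    intro x
    rw [← this]
  -- S commutes with pointwise midpoints
  have hSpt : ∀ α β : ℕ → A, S (fun n => M.m (α n) (β n)) = M.m (S α) (S β) := by
    obtain ⟨w, hw, hwuniq⟩ := hA ((ℕ → A) × (ℕ → A))
      (fun p => ((fun n => p.1 (n + 1), fun n => p.2 (n + 1)), M.m (p.1 0) (p.2 0)))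
    simp only at hw hwuniq
    have hF : (fun p : (ℕ → A) × (ℕ → A) => S (fun n => M.m (p.1 n) (p.2 n))) = w := by
      apply hwuniq
      intro p
      exact hS (fun n => M.m (p.1 n) (p.2 n))
    have hG : (fun p : (ℕ → A) × (ℕ → A) => M.m (S p.1) (S p.2)) = w := by
      apply hwuniq
      intro p
      rw [hS p.1, hS p.2, M.medial]
    intro α β
    have := hF.trans hG.symm
    exact congrFun this (α, β)
  -- the value of a {0,1/2,1}-digit stream
  have hL : ∀ c : ℕ → ℝ, (∀ n, c n = 0 ∨ c n = 1/2 ∨ c n = 1) →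
      ∀ hmem : sVal c ∈ Set.Icc (0:ℝ) 1,
      S (fun n => digElem M a₀ a₁ (c n)) = u ⟨sVal c, hmem⟩ := by
    obtain ⟨w, hw, hwuniq⟩ := hA {c : ℕ → ℝ // ∀ n, c n = 0 ∨ c n = 1/2 ∨ c n = 1}
      (fun c => (⟨fun n => c.1 (n + 1), fun n => c.2 (n + 1)⟩, digElem M a₀ a₁ (c.1 0)))
    simp only at hw hwuniq
    have hF : (fun c : {c : ℕ → ℝ // ∀ n, c n = 0 ∨ c n = 1/2 ∨ c n = 1} =>
        S (fun n => digElem M a₀ a₁ (c.1 n))) = w := by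
      apply hwuniq
      intro c
      exact hS (fun n => digElem M a₀ a₁ (c.1 n))
    have hG : (fun c : {c : ℕ → ℝ // ∀ n, c n = 0 ∨ c n = 1/2 ∨ c n = 1} =>
        u ⟨sVal c.1, ⟨sVal_nonneg (fun n => dmem_nonneg (c.2 n)),
          sVal_le_one (fun n => dmem_nonneg (c.2 n)) (fun n => dmem_le_one (c.2 n))⟩⟩) = w := by
      apply hwuniq
      intro c
      have ht0 : ∀ n, 0 ≤ c.1 (n + 1) := fun n => dmem_nonneg (c.2 (n + 1))
      have ht1 : ∀ n, c.1 (n + 1) ≤ 1 := fun n => dmem_le_one (c.2 (n + 1))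
      have htv0 : 0 ≤ sVal (fun n => c.1 (n + 1)) := sVal_nonneg ht0
      have htv1 : sVal (fun n => c.1 (n + 1)) ≤ 1 := sVal_le_one ht0 ht1
      have hcons : sVal c.1 = (c.1 0 + sVal (fun n => c.1 (n + 1))) / 2 :=
        sVal_cons (fun n => dmem_nonneg (c.2 n)) (fun n => dmem_le_one (c.2 n))
      rcases c.2 0 with h0 | h0 | h0
      · rw [h0] at hcons
        rw [h0, digElem_zero]
        apply eq0
        · show sVal c.1 ≤ 1/2
          rw [hcons]; linarith
        · show sVal (fun n => c.1 (n + 1)) = 2 * sVal c.1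
          rw [hcons]; ring
      · rw [h0] at hcons
        rw [h0, digElem_half]
        apply eqh
        · show 1/4 ≤ sVal c.1
          rw [hcons]; linarith
        · show sVal c.1 ≤ 3/4
          rw [hcons]; linarith
        · show sVal (fun n => c.1 (n + 1)) = 2 * sVal c.1 - 1/2
          rw [hcons]; ring
      · rw [h0] at hcons
        rw [h0, digElem_one]
        apply eq1
        · show 1/2 ≤ sVal c.1
          rw [hcons]; linarith
        · show sVal (fun n => c.1 (n + 1)) = 2 * sVal c.1 - 1
          rw [hcons]; ring
    intro c hc hmem
    have := hF.trans hG.symm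
    have h2 := congrFun this ⟨c, hc⟩
    simpa using h2
  -- existence and uniqueness
  refine ⟨u, ⟨?_, hu0, hu1⟩, ?_⟩
  · -- u is a midpoint homomorphism
    intro x y
    have hdx0 : ∀ n, 0 ≤ ivDig x n := fun n => by
      rcases ivDig_mem x n with h | h <;> rw [h] <;> norm_num
    have hdx1 : ∀ n, ivDig x n ≤ 1 := fun n => by
      rcases ivDig_mem x n with h | h <;> rw [h] <;> norm_num
    have hdy0 : ∀ n, 0 ≤ ivDig y n := fun n => by
      rcases ivDig_mem y n with h | h <;> rw [h] <;> norm_num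
    have hdy1 : ∀ n, ivDig y n ≤ 1 := fun n => by
      rcases ivDig_mem y n with h | h <;> rw [h] <;> norm_num
    set c : ℕ → ℝ := fun n => (ivDig x n + ivDig y n) / 2 with hcdef
    have hc : ∀ n, c n = 0 ∨ c n = 1/2 ∨ c n = 1 := by
      intro n
      rcases ivDig_mem x n with h1 | h1 <;> rcases ivDig_mem y n with h2 | h2 <;>
        simp [hcdef, h1, h2] <;> norm_num
    have hpt : ∀ n, M.m (digElem M a₀ a₁ (ivDig x n)) (digElem M a₀ a₁ (ivDig y n))
        = digElem M a₀ a₁ (c n) := by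
      intro n
      rcases ivDig_mem x n with h1 | h1 <;> rcases ivDig_mem y n with h2 | h2 <;>
        simp only [hcdef, h1, h2]
      · have e : ((0:ℝ) + 0) / 2 = 0 := by norm_num
        rw [e, digElem_zero, M.idem]
      · have e : ((0:ℝ) + 1) / 2 = 1/2 := by norm_num
        rw [e, digElem_zero, digElem_one, digElem_half]
      · have e : ((1:ℝ) + 0) / 2 = 1/2 := by norm_num
        rw [e, digElem_zero, digElem_one, digElem_half, M.comm]
      · have e : ((1:ℝ) + 1) / 2 = 1 := by norm_num
        rw [e, digElem_one, M.idem]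
    have hvc : sVal c = (x.1 + y.1) / 2 := by
      rw [hcdef, sVal_avg hdx0 hdx1 hdy0 hdy1, sVal_dig x, sVal_dig y]
    have hmem : sVal c ∈ Set.Icc (0:ℝ) 1 := by
      rw [hvc]; exact (midI x y).2
    have hmid : midI x y = ⟨sVal c, hmem⟩ := by
      apply Subtype.ext
      show (x.1 + y.1) / 2 = sVal c
      rw [hvc]
    rw [hmid, ← hL c hc hmem, hSdig x, hSdig y, ← hSpt]
    congr 1
    funext n
    exact (hpt n).symm
  · -- uniqueness
    rintro g ⟨ghom, g0, g1⟩
    apply huuniq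
    intro x
    by_cases hx : x.1 ≤ 1/2
    · have hmid : x = midI (ivTl x) ⟨0, by norm_num⟩ := by
        apply Subtype.ext
        show x.1 = ((ivTl x).1 + 0) / 2
        unfold ivTl
        rw [dif_pos hx]
        show x.1 = (2 * x.1 + 0) / 2
        ring
      rw [if_pos hx]
      calc g x = g (midI (ivTl x) ⟨0, by norm_num⟩) := by rw [← hmid]
        _ = M.m (g (ivTl x)) (g ⟨0, by norm_num⟩) := ghom _ _
        _ = M.m (g (ivTl x)) a₀ := by rw [g0]
    · have hmid : x = midI (ivTl x) ⟨1, by norm_num⟩ := by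
        apply Subtype.ext
        show x.1 = ((ivTl x).1 + 1) / 2
        unfold ivTl
        rw [dif_neg hx]
        show x.1 = ((2 * x.1 - 1) + 1) / 2
        ring
      rw [if_neg hx]
      calc g x = g (midI (ivTl x) ⟨1, by norm_num⟩) := by rw [← hmid]
        _ = M.m (g (ivTl x)) (g ⟨1, by norm_num⟩) := ghom _ _
        _ = M.m (g (ivTl x)) a₁ := by rw [g1]
end

section
/- In an iterable midpoint algebra A (in Set), for every sequence (a_n)_{n≥1} in A there exists a unique element M(a₁,a₂,…) satisfying M(a₁,a₂,…) = m(a₁, M(a₂,a₃,…)); moreover if two sequences (a_i) and (b_i) satisfy b_i = m(a_i, b_{i+1}) for all i, then b₁ = M(a₁,a₂,…). In particular in [0,1] with the midpoint operation (x+y)/2, M(a₁,a₂,…) = Σ_{i≥1} a_i/2^i. -/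
theorem part1 (A : Type) (M : MidpointAlg A) (hIt : M.Iterable) :
    ∃! MM : (ℕ → A) → A, ∀ a, MM a = M.m (a 0) (MM fun n => a (n + 1)) := by
  obtain ⟨u, hu, huniq⟩ := hIt (ℕ → A) (fun a => (fun n => a (n + 1), a 0))
  refine ⟨u, fun a => by rw [hu a, M.comm], fun v hv => huniq v fun a => by rw [hv a, M.comm]⟩

theorem part2 (A : Type) (M : MidpointAlg A) (hIt : M.Iterable)
    (MM : (ℕ → A) → A) (hMM : ∀ a, MM a = M.m (a 0) (MM fun n => a (n + 1)))
    (a b : ℕ → A) (hab : ∀ i, b i = M.m (a i) (b (i + 1))) : b 0 = MM a := by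
  obtain ⟨u, hu, huniq⟩ := hIt ℕ (fun n => (n + 1, a n))
  have h1 : b = u := huniq b fun n => by rw [hab n, M.comm]
  have h2 : (fun n => MM fun k => a (n + k)) = u := by
    refine huniq _ fun n => ?_
    simp only
    rw [hMM (fun k => a (n + k)), M.comm,
      show (fun k => a (n + (k + 1))) = (fun k => a (n + 1 + k)) from
        funext fun k => by congr 1; omega, show n + 0 = n from rfl]
  have := congrFun (h1.trans h2.symm) 0
  simpa using this

theorem part3 (MM : (ℕ → Set.Icc (0:ℝ) 1) → Set.Icc (0:ℝ) 1)
    (hMM : ∀ a, MM a = midI (a 0) (MM fun n => a (n + 1)))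
    (a : ℕ → Set.Icc (0:ℝ) 1) : (MM a : ℝ) = ∑' i : ℕ, (a i : ℝ) / 2 ^ (i + 1) := by
  have key : ∀ n : ℕ, ∀ a : ℕ → Set.Icc (0:ℝ) 1, (MM a : ℝ) =
      (∑ i ∈ Finset.range n, (a i : ℝ) / 2 ^ (i + 1)) + (MM fun k => a (k + n)) / 2 ^ n := by
    intro n
    induction n with
    | zero => intro a; simp
    | succ n ih =>
      intro a
      have h1 : (MM fun k => a (k + n)) = midI (a n) (MM fun k => a (k + (n + 1))) := by
        rw [hMM (fun k => a (k + n))]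
        congr 1
        · congr 1; omega
        · congr 1; funext k; congr 1; omega
      rw [ih a, h1, Finset.sum_range_succ]
      show _ = _ + ((a n : ℝ) / 2 ^ (n + 1)) + ((MM fun k => a (k + (n + 1))) : ℝ) / 2 ^ (n + 1)
      have : ((midI (a n) (MM fun k => a (k + (n + 1)))) : ℝ)
          = ((a n : ℝ) + ((MM fun k => a (k + (n + 1))) : ℝ)) / 2 := rfl
      rw [this]
      ring
  set f : ℕ → ℝ := fun i => (a i : ℝ) / 2 ^ (i + 1) with hf
  have hsum : Summable f := by
    apply Summable.of_nonneg_of_le (fun i => div_nonneg (a i).2.1 (by positivity))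
      (fun i => ?_) (summable_geometric_two.mul_left (1/2))
    show (a i : ℝ) / 2 ^ (i + 1) ≤ 1/2 * (1/2)^i
    have h1 := (a i).2.2
    have h2 : (0:ℝ) < 2 ^ (i+1) := by positivity
    rw [div_le_iff₀ h2, show (1/2 : ℝ) * (1/2)^i * 2^(i+1) = 1 from by
      rw [pow_succ]; field_simp; ring_nf; rw [← mul_pow]; norm_num]
    exact h1
  have hlim1 : Filter.Tendsto (fun n => ∑ i ∈ Finset.range n, f i) Filter.atTop
      (nhds (∑' i, f i)) := hsum.hasSum.tendsto_sum_nat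
  have hlim2 : Filter.Tendsto (fun n => ∑ i ∈ Finset.range n, f i) Filter.atTop
      (nhds (MM a : ℝ)) := by
    have heq : ∀ n, ∑ i ∈ Finset.range n, f i
        = (MM a : ℝ) - ((MM fun k => a (k + n)) : ℝ) / 2 ^ n := by
      intro n; rw [key n a]; ring
    have h0 : Filter.Tendsto (fun n => ((MM fun k => a (k + n)) : ℝ) / 2 ^ n)
        Filter.atTop (nhds 0) := by
      apply squeeze_zero (fun n => div_nonneg (MM fun k => a (k + n)).2.1 (by positivity))
        (fun n => ?_)
        (tendsto_pow_atTop_nhds_zero_of_lt_one (by norm_num : (0:ℝ) ≤ 1/2) (by norm_num))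
      show ((MM fun k => a (k + n)) : ℝ) / 2 ^ n ≤ (1/2)^n
      have := (MM fun k => a (k + n)).2.2
      rw [div_pow, one_pow]
      apply div_le_div_of_nonneg_right this (by positivity) |>.trans_eq rfl
    have := Filter.Tendsto.sub (tendsto_const_nhds (x := (MM a : ℝ))) h0
    simpa [heq] using this
  exact tendsto_nhds_unique hlim2 hlim1

/-- In an iterable midpoint algebra there is a unique infinitary midpoint operator
`M` with `M(a₁,a₂,…) = m(a₁, M(a₂,…))`; any sequence `b` with `bᵢ = m(aᵢ, bᵢ₊₁)`
has `b₁ = M(a₁,a₂,…)`; and on `[0,1]` this operator is `Σᵢ aᵢ/2^i`. -/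
theorem iterable_infinitary_midpoint :
    (∀ (A : Type) (M : MidpointAlg A), M.Iterable →
      ∃! MM : (ℕ → A) → A, ∀ a, MM a = M.m (a 0) (MM fun n => a (n + 1))) ∧
    (∀ (A : Type) (M : MidpointAlg A), M.Iterable →
      ∀ MM : (ℕ → A) → A, (∀ a, MM a = M.m (a 0) (MM fun n => a (n + 1))) →
      ∀ a b : ℕ → A, (∀ i, b i = M.m (a i) (b (i + 1))) → b 0 = MM a) ∧
    (∀ MM : (ℕ → Set.Icc (0:ℝ) 1) → Set.Icc (0:ℝ) 1,
      (∀ a, MM a = midI (a 0) (MM fun n => a (n + 1))) →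
      ∀ a : ℕ → Set.Icc (0:ℝ) 1, (MM a : ℝ) = ∑' i : ℕ, (a i : ℝ) / 2 ^ (i + 1)) :=
  ⟨part1, part2, part3⟩
end

section
/- The unit interval [0,1] with the operation m(x,y)=(x+y)/2 is an iterable midpoint algebra: m is idempotent, commutative, and medial, and for every set X and every map s : X → X × [0,1] there is a unique u : X → [0,1] with u(x) = (u(π₁ s(x)) + π₂ s(x))/2 for all x. -/
/-!
For `s = (f, g)` the iteration is forced to be `u x = ∑ₙ g (fⁿ x) / 2ⁿ⁺¹`: this series satisfies the
recursion, and two bounded solutions differ by at most `C / 2ⁿ` for every `n`, since each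
unfolding of the recursion halves their difference.
-/

open Set Filter Topology

@[simp]
theorem coe_midI (x y : Icc (0:ℝ) 1) : (midI x y : ℝ) = (x + y) / 2 := rfl

theorem midI_self (x : Icc (0:ℝ) 1) : midI x x = x :=
  Subtype.ext <| by simp

theorem midI_comm (x y : Icc (0:ℝ) 1) : midI x y = midI y x :=
  Subtype.ext <| by simp [add_comm]

theorem midI_midI_midI_comm (a b c d : Icc (0:ℝ) 1) :
    midI (midI a b) (midI c d) = midI (midI a c) (midI b d) :=
  Subtype.ext <| by simp only [coe_midI]; ring

section MidpointIterate

variable {X : Type*} (f : X → X) (g : X → ℝ)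

noncomputable def midpointIterate (x : X) : ℝ :=
  ∑' n : ℕ, g (f^[n] x) / 2 ^ (n + 1)

variable {f g}

theorem iterate_div_two_pow_le (hg : ∀ x, g x ∈ Icc 0 1) (x : X) (n : ℕ) :
    g (f^[n] x) / 2 ^ (n + 1) ≤ 1 / 2 / 2 ^ n := by
  rw [pow_succ, div_div, mul_comm]
  exact div_le_div_of_nonneg_right (hg _).2 (by positivity)

theorem summable_midpointIterate (hg : ∀ x, g x ∈ Icc 0 1) (x : X) :
    Summable fun n : ℕ => g (f^[n] x) / 2 ^ (n + 1) :=
  (summable_geometric_two' 1).of_nonneg_of_le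
    (fun _ => div_nonneg (hg _).1 (by positivity)) (iterate_div_two_pow_le hg x)

theorem midpointIterate_mem_Icc (hg : ∀ x, g x ∈ Icc 0 1) (x : X) :
    midpointIterate f g x ∈ Icc 0 1 := by
  refine ⟨tsum_nonneg fun n => div_nonneg (hg _).1 (by positivity), ?_⟩
  calc midpointIterate f g x ≤ ∑' n : ℕ, 1 / 2 / 2 ^ n :=
        (summable_midpointIterate hg x).tsum_le_tsum (iterate_div_two_pow_le hg x)
          (summable_geometric_two' 1)
    _ = 1 := tsum_geometric_two' 1

theorem midpointIterate_eq (hg : ∀ x, g x ∈ Icc 0 1) (x : X) :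
    midpointIterate f g x = (midpointIterate f g (f x) + g x) / 2 := by
  rw [midpointIterate, (summable_midpointIterate hg x).tsum_eq_zero_add, midpointIterate,
    add_div, ← tsum_div_const, add_comm]
  simp only [Function.iterate_succ_apply, Function.iterate_zero_apply, pow_succ _ (_ + 1),
    div_div, zero_add, pow_one]

theorem abs_sub_le_div_two_pow_of_eq_midpoint {v w : X → ℝ}
    (hv : ∀ x, v x = (v (f x) + g x) / 2) (hw : ∀ x, w x = (w (f x) + g x) / 2)
    {C : ℝ} (hC : ∀ x, |v x - w x| ≤ C) (n : ℕ) (x : X) :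
    |v x - w x| ≤ C / 2 ^ n := by
  induction n generalizing x with
  | zero => simpa using hC x
  | succ n ih =>
    calc |v x - w x| = |v (f x) - w (f x)| / 2 := by
          rw [hv x, hw x, ← sub_div, add_sub_add_right_eq_sub, abs_div, abs_two]
      _ ≤ C / 2 ^ n / 2 := by gcongr; exact ih (f x)
      _ = C / 2 ^ (n + 1) := by rw [pow_succ, div_div]

theorem eq_of_eq_midpoint {v w : X → ℝ}
    (hv : ∀ x, v x = (v (f x) + g x) / 2) (hw : ∀ x, w x = (w (f x) + g x) / 2)
    {C : ℝ} (hC : ∀ x, |v x - w x| ≤ C) : v = w := by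
  funext x
  have hlim : Tendsto (fun n : ℕ => C / 2 ^ n) atTop (𝓝 0) :=
    (tendsto_pow_atTop_atTop_of_one_lt one_lt_two).const_div_atTop C
  have hle : |v x - w x| ≤ 0 :=
    ge_of_tendsto' hlim fun n => abs_sub_le_div_two_pow_of_eq_midpoint hv hw hC n x
  exact sub_eq_zero.mp (abs_nonpos_iff.mp hle)

end MidpointIterate

/-- The unit interval `[0,1]` with `m(x,y) = (x+y)/2` is an iterable midpoint
algebra: `m` is idempotent, commutative and medial, and every `s : X → X × [0,1]`
admits a unique iteration `u` with `u x = (u (s x).1 + (s x).2)/2`. -/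
theorem interval_iterable_midpoint_algebra :
    (∀ x, midI x x = x) ∧
    (∀ x y, midI x y = midI y x) ∧
    (∀ a b c d, midI (midI a b) (midI c d) = midI (midI a c) (midI b d)) ∧
    (∀ (X : Type) (s : X → X × Set.Icc (0:ℝ) 1),
      ∃! u : X → Set.Icc (0:ℝ) 1, ∀ x, u x = midI (u (s x).1) (s x).2) := by
  refine ⟨midI_self, midI_comm, midI_midI_midI_comm, fun X s => ?_⟩
  set u := midpointIterate (fun x => (s x).1) (fun x => ((s x).2 : ℝ))
  have hg : ∀ x, ((s x).2 : ℝ) ∈ Icc 0 1 := fun x => (s x).2.2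
  refine ⟨fun x => ⟨u x, midpointIterate_mem_Icc hg x⟩,
    fun x => Subtype.ext (midpointIterate_eq hg x), fun v hv => ?_⟩
  have hv_eq : ∀ x, (v x : ℝ) = (v (s x).1 + (s x).2) / 2 := fun x => congrArg Subtype.val (hv x)
  have hv_sub_u : ∀ x, |(v x : ℝ) - u x| ≤ 1 := fun x =>
    abs_sub_le_of_nonneg_of_le (v x).2.1 (v x).2.2
      (midpointIterate_mem_Icc hg x).1 (midpointIterate_mem_Icc hg x).2
  funext x
  exact Subtype.ext (congrFun (eq_of_eq_midpoint hv_eq (midpointIterate_eq hg) hv_sub_u) x)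
end

section
/- In any Markov category C, any two coinflip structures coincide. That is, if m₁ and m₂ are two families of midpoint algebra structures on the homsets C(X,Y), each natural in X and Y (pre- and postcomposition are midpoint homomorphisms), then m₁(f,g) = m₂(f,g) for all parallel morphisms f,g : X → Y. -/
open CategoryTheory MonoidalCategory

/-- A Markov category: a symmetric monoidal category in which every object carries
a commutative comonoid structure (copy, del), compatible with the tensor product,
with del natural. -/
class MarkovCategory (C : Type*) [Category C] [MonoidalCategory C]
    [SymmetricCategory C] where
  copy : ∀ X : C, X ⟶ X ⊗ X
  del : ∀ X : C, X ⟶ 𝟙_ C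
  copy_del : ∀ X : C, copy X ≫ (del X ▷ X) = (λ_ X).inv
  copy_comm : ∀ X : C, copy X ≫ (β_ X X).hom = copy X
  copy_assoc : ∀ X : C,
    copy X ≫ (copy X ▷ X) ≫ (α_ X X X).hom = copy X ≫ (X ◁ copy X)
  del_natural : ∀ {X Y : C} (f : X ⟶ Y), f ≫ del Y = del X
  del_unit : del (𝟙_ C) = 𝟙 (𝟙_ C)
  copy_unit : copy (𝟙_ C) = (λ_ (𝟙_ C)).inv
  copy_tensor : ∀ X Y : C, copy (X ⊗ Y) = (copy X ⊗ₘ copy Y) ≫ tensorμ X X Y Y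
  del_tensor : ∀ X Y : C, del (X ⊗ Y) = (del X ⊗ₘ del Y) ≫ (λ_ (𝟙_ C)).hom

/-- A coinflip structure on a Markov category: a midpoint algebra structure on
every hom-set, natural under both pre- and postcomposition. -/
structure CoinflipStruct (C : Type*) [Category C] [MonoidalCategory C]
    [SymmetricCategory C] [_root_.MarkovCategory C] where
  m : ∀ {X Y : C}, (X ⟶ Y) → (X ⟶ Y) → (X ⟶ Y)
  idem : ∀ {X Y : C} (f : X ⟶ Y), m f f = f
  comm : ∀ {X Y : C} (f g : X ⟶ Y), m f g = m g f
  medial : ∀ {X Y : C} (f g h k : X ⟶ Y), m (m f g) (m h k) = m (m f h) (m g k)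
  pre : ∀ {X Y Z : C} (h : X ⟶ Y) (f g : Y ⟶ Z), h ≫ m f g = m (h ≫ f) (h ≫ g)
  post : ∀ {X Y Z : C} (f g : X ⟶ Y) (h : Y ⟶ Z), m f g ≫ h = m (f ≫ h) (g ≫ h)

/-- In any Markov category, any two coinflip structures coincide. -/
theorem coinflip_structure_unique (C : Type*) [Category C] [MonoidalCategory C]
    [SymmetricCategory C] [_root_.MarkovCategory C]
    (m₁ m₂ : CoinflipStruct C) :
    ∀ (X Y : C) (f g : X ⟶ Y), m₁.m f g = m₂.m f g := by
  intro X Y f g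
  -- copy followed by deleting the right component is the right unitor inverse
  have copy_del' : ∀ Z : C, _root_.MarkovCategory.copy Z ≫ (Z ◁ _root_.MarkovCategory.del Z)
      = (ρ_ Z).inv := by
    intro Z
    conv_lhs => rw [← _root_.MarkovCategory.copy_comm Z]
    rw [Category.assoc, ← BraidedCategory.braiding_naturality_left
      (_root_.MarkovCategory.del Z) Z]
    rw [braiding_tensorUnit_left, ← Category.assoc, ← Category.assoc,
      _root_.MarkovCategory.copy_del]
    simp
  -- first projection: copy ≫ (u ⊗ₘ v) ≫ π₁ = u
  have projA : ∀ {Z W : C} (u v : Z ⟶ W),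
      _root_.MarkovCategory.copy Z ≫ (u ⊗ₘ v) ≫ (W ◁ _root_.MarkovCategory.del W) ≫ (ρ_ W).hom
        = u := by
    intro Z W u v
    have h1 : (u ⊗ₘ v) ≫ (W ◁ _root_.MarkovCategory.del W)
        = (Z ◁ _root_.MarkovCategory.del Z) ≫ (u ▷ 𝟙_ C) := by
      rw [MonoidalCategory.tensorHom_def, Category.assoc, ← MonoidalCategory.whiskerLeft_comp,
        _root_.MarkovCategory.del_natural, whisker_exchange]
    calc _root_.MarkovCategory.copy Z ≫ (u ⊗ₘ v) ≫ (W ◁ _root_.MarkovCategory.del W) ≫ (ρ_ W).hom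
        = _root_.MarkovCategory.copy Z ≫ ((u ⊗ₘ v) ≫ (W ◁ _root_.MarkovCategory.del W))
            ≫ (ρ_ W).hom := by simp
      _ = (_root_.MarkovCategory.copy Z ≫ (Z ◁ _root_.MarkovCategory.del Z))
            ≫ (u ▷ 𝟙_ C) ≫ (ρ_ W).hom := by rw [h1]; simp
      _ = (ρ_ Z).inv ≫ (u ▷ 𝟙_ C) ≫ (ρ_ W).hom := by rw [copy_del']
      _ = u := by simp
  -- second projection: copy ≫ (u ⊗ₘ v) ≫ π₂ = v
  have projB : ∀ {Z W : C} (u v : Z ⟶ W),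
      _root_.MarkovCategory.copy Z ≫ (u ⊗ₘ v) ≫ (_root_.MarkovCategory.del W ▷ W) ≫ (λ_ W).hom
        = v := by
    intro Z W u v
    have h1 : (u ⊗ₘ v) ≫ (_root_.MarkovCategory.del W ▷ W)
        = (_root_.MarkovCategory.del Z ▷ Z) ≫ (𝟙_ C ◁ v) := by
      rw [MonoidalCategory.tensorHom_def', Category.assoc, ← MonoidalCategory.comp_whiskerRight,
        _root_.MarkovCategory.del_natural, ← whisker_exchange]
    calc _root_.MarkovCategory.copy Z ≫ (u ⊗ₘ v) ≫ (_root_.MarkovCategory.del W ▷ W) ≫ (λ_ W).hom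
        = _root_.MarkovCategory.copy Z ≫ ((u ⊗ₘ v) ≫ (_root_.MarkovCategory.del W ▷ W))
            ≫ (λ_ W).hom := by simp
      _ = (_root_.MarkovCategory.copy Z ≫ (_root_.MarkovCategory.del Z ▷ Z))
            ≫ (𝟙_ C ◁ v) ≫ (λ_ W).hom := by rw [h1]; simp
      _ = (λ_ Z).inv ≫ (𝟙_ C ◁ v) ≫ (λ_ W).hom := by rw [_root_.MarkovCategory.copy_del]
      _ = v := by simp
  -- the two projections out of Y ⊗ Y
  set p1 : Y ⊗ Y ⟶ Y := (Y ◁ _root_.MarkovCategory.del Y) ≫ (ρ_ Y).hom with hp1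
  set p2 : Y ⊗ Y ⟶ Y := (_root_.MarkovCategory.del Y ▷ Y) ≫ (λ_ Y).hom with hp2
  have projA' : ∀ (u v : X ⟶ Y), _root_.MarkovCategory.copy X ≫ (u ⊗ₘ v) ≫ p1 = u := by
    intro u v; rw [hp1, ← Category.assoc (u ⊗ₘ v)]
    rw [Category.assoc]; exact projA u v
  have projB' : ∀ (u v : X ⟶ Y), _root_.MarkovCategory.copy X ≫ (u ⊗ₘ v) ≫ p2 = v := by
    intro u v; rw [hp2, ← Category.assoc (u ⊗ₘ v)]
    rw [Category.assoc]; exact projB u v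
  -- representation: m u v = copy ≫ (u ⊗ₘ v) ≫ m p1 p2
  have rep : ∀ (m : CoinflipStruct C) (u v : X ⟶ Y),
      _root_.MarkovCategory.copy X ≫ (u ⊗ₘ v) ≫ m.m p1 p2 = m.m u v := by
    intro m u v
    rw [m.pre (u ⊗ₘ v) p1 p2, m.pre (_root_.MarkovCategory.copy X), projA' u v, projB' u v]
  -- interchange law between the two structures
  have interchange : ∀ (a b c d : X ⟶ Y),
      m₁.m (m₂.m a b) (m₂.m c d) = m₂.m (m₁.m a c) (m₁.m b d) := by
    intro a b c d
    calc m₁.m (m₂.m a b) (m₂.m c d)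
        = m₁.m (_root_.MarkovCategory.copy X ≫ ((a ⊗ₘ b) ≫ m₂.m p1 p2))
            (_root_.MarkovCategory.copy X ≫ ((c ⊗ₘ d) ≫ m₂.m p1 p2)) := by
          rw [rep m₂ a b, rep m₂ c d]
      _ = _root_.MarkovCategory.copy X ≫ m₁.m ((a ⊗ₘ b) ≫ m₂.m p1 p2)
            ((c ⊗ₘ d) ≫ m₂.m p1 p2) := (m₁.pre _ _ _).symm
      _ = _root_.MarkovCategory.copy X ≫ (m₁.m (a ⊗ₘ b) (c ⊗ₘ d) ≫ m₂.m p1 p2) := by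
          rw [m₁.post]
      _ = _root_.MarkovCategory.copy X ≫ m₂.m (m₁.m (a ⊗ₘ b) (c ⊗ₘ d) ≫ p1)
            (m₁.m (a ⊗ₘ b) (c ⊗ₘ d) ≫ p2) := by rw [m₂.pre]
      _ = m₂.m (_root_.MarkovCategory.copy X ≫ (m₁.m (a ⊗ₘ b) (c ⊗ₘ d) ≫ p1))
            (_root_.MarkovCategory.copy X ≫ (m₁.m (a ⊗ₘ b) (c ⊗ₘ d) ≫ p2)) := m₂.pre _ _ _
      _ = m₂.m (m₁.m (_root_.MarkovCategory.copy X ≫ ((a ⊗ₘ b) ≫ p1))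
              (_root_.MarkovCategory.copy X ≫ ((c ⊗ₘ d) ≫ p1)))
            (m₁.m (_root_.MarkovCategory.copy X ≫ ((a ⊗ₘ b) ≫ p2))
              (_root_.MarkovCategory.copy X ≫ ((c ⊗ₘ d) ≫ p2))) := by
          rw [m₁.post _ _ p1, m₁.post _ _ p2, m₁.pre, m₁.pre]
      _ = m₂.m (m₁.m a c) (m₁.m b d) := by
          rw [projA' a b, projA' c d, projB' a b, projB' c d]
  -- Eckmann–Hilton style conclusion
  have h := interchange f g g f
  rw [m₂.comm g f, m₁.idem, m₁.comm g f, m₂.idem] at h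
  exact h.symm
end

section
/- Let C be a distributive Markov category (C_det has finite coproducts preserved by the inclusion into C and by the tensors A ⊗ −). Then any two coinflips in C are equal: if f₁, f₂ : I → I + I both satisfy symmetry (swapping the two summands fixes f_i) and interchange ((f+f)∘f = (I + swap + I)∘(f+f)∘f), then f₁ = f₂. -/
open CategoryTheory MonoidalCategory Limits

variable {C : Type*} [Category C] [MonoidalCategory C] [SymmetricCategory C]
  [_root_.MarkovCategory C]

open _root_.MarkovCategory

/-- A morphism in a Markov category is deterministic if it is a comonoid
homomorphism, i.e. commutes with copy. -/
def Deterministic {X Y : C} (f : X ⟶ Y) : Prop :=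
  f ≫ copy Y = copy X ≫ (f ⊗ₘ f)

section
variable [HasBinaryCoproducts C]

/-- The permutation of `(I+I)+(I+I)` swapping the two middle summands. -/
noncomputable def midSwap (X : C) : (X ⨿ X) ⨿ (X ⨿ X) ⟶ (X ⨿ X) ⨿ (X ⨿ X) :=
  coprod.desc
    (coprod.desc (coprod.inl ≫ coprod.inl) (coprod.inl ≫ coprod.inr))
    (coprod.desc (coprod.inr ≫ coprod.inl) (coprod.inr ≫ coprod.inr))

/-- A coinflip: a morphism `I ⟶ I + I` satisfying symmetry and interchange. -/
def IsCoinflip (f : 𝟙_ C ⟶ 𝟙_ C ⨿ 𝟙_ C) : Prop :=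
  f ≫ coprod.desc coprod.inr coprod.inl = f ∧
  f ≫ coprod.map f f = f ≫ coprod.map f f ≫ midSwap (𝟙_ C)

/-- Every endomorphism of the monoidal unit is the identity. -/
lemma endo_unit_eq_id (e : 𝟙_ C ⟶ 𝟙_ C) : e = 𝟙 (𝟙_ C) := by
  have h := del_natural (C := C) e
  rwa [del_unit, Category.comp_id] at h

/-- Negation on `I ⨿ I`. -/
noncomputable def negMap : ((𝟙_ C) ⨿ (𝟙_ C) : C) ⟶ (𝟙_ C) ⨿ (𝟙_ C) :=
  coprod.desc coprod.inr coprod.inl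

@[simp] lemma inl_negMap : (coprod.inl : 𝟙_ C ⟶ _) ≫ negMap = coprod.inr := by
  unfold negMap; exact coprod.inl_desc _ _

@[simp] lemma inr_negMap : (coprod.inr : 𝟙_ C ⟶ _) ≫ negMap = coprod.inl := by
  unfold negMap; exact coprod.inr_desc _ _

/-- Extensionality along a left-tensored coproduct, given distributivity. -/
lemma tensor_ext_left {A X Y Z : C}
    (h : IsIso (coprodComparison (tensorLeft A) X Y))
    {p q : A ⊗ (X ⨿ Y) ⟶ Z}
    (h1 : A ◁ (coprod.inl : X ⟶ X ⨿ Y) ≫ p = A ◁ coprod.inl ≫ q)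
    (h2 : A ◁ (coprod.inr : Y ⟶ X ⨿ Y) ≫ p = A ◁ coprod.inr ≫ q) : p = q := by
  haveI := h
  have heq : coprodComparison (tensorLeft A) X Y ≫ p
      = coprodComparison (tensorLeft A) X Y ≫ q := by
    apply coprod.hom_ext
    · rw [← Category.assoc, coprodComparison_inl, ← Category.assoc,
        coprodComparison_inl]
      exact h1
    · rw [← Category.assoc, coprodComparison_inr, ← Category.assoc,
        coprodComparison_inr]
      exact h2
  exact (cancel_epi (coprodComparison (tensorLeft A) X Y)).mp heq

/-- Extensionality along a right-tensored coproduct, via the braiding. -/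
lemma tensor_ext_right {A X Y Z : C}
    (h : IsIso (coprodComparison (tensorLeft A) X Y))
    {p q : (X ⨿ Y) ⊗ A ⟶ Z}
    (h1 : (coprod.inl : X ⟶ X ⨿ Y) ▷ A ≫ p = coprod.inl ▷ A ≫ q)
    (h2 : (coprod.inr : Y ⟶ X ⨿ Y) ▷ A ≫ p = coprod.inr ▷ A ≫ q) : p = q := by
  rw [← cancel_epi (β_ A (X ⨿ Y)).hom]
  apply tensor_ext_left h
  · rw [← Category.assoc, BraidedCategory.braiding_naturality_right,
      ← Category.assoc, BraidedCategory.braiding_naturality_right,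
      Category.assoc, Category.assoc, h1]
  · rw [← Category.assoc, BraidedCategory.braiding_naturality_right,
      ← Category.assoc, BraidedCategory.braiding_naturality_right,
      Category.assoc, Category.assoc, h2]

/-- The XOR map on `(I ⨿ I) ⊗ (I ⨿ I)`, defined via distributivity. -/
noncomputable def xorMap
    [IsIso (coprodComparison (tensorLeft ((𝟙_ C) ⨿ (𝟙_ C))) (𝟙_ C) (𝟙_ C))] :
    (((𝟙_ C) ⨿ (𝟙_ C)) ⊗ ((𝟙_ C) ⨿ (𝟙_ C)) : C) ⟶ (𝟙_ C) ⨿ (𝟙_ C) :=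
  inv (coprodComparison (tensorLeft ((𝟙_ C) ⨿ (𝟙_ C))) (𝟙_ C) (𝟙_ C)) ≫
    coprod.desc (ρ_ _).hom ((ρ_ _).hom ≫ negMap)

lemma whiskerLeft_inl_xorMap
    [IsIso (coprodComparison (tensorLeft ((𝟙_ C) ⨿ (𝟙_ C))) (𝟙_ C) (𝟙_ C))] :
    ((𝟙_ C) ⨿ (𝟙_ C) : C) ◁ (coprod.inl : 𝟙_ C ⟶ _) ≫ xorMap = (ρ_ _).hom := by
  have h := map_inl_inv_coprodComparison
    (F := tensorLeft ((𝟙_ C) ⨿ (𝟙_ C) : C)) (A := 𝟙_ C) (B := 𝟙_ C)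
  rw [xorMap, ← Category.assoc]
  rw [show (((𝟙_ C) ⨿ (𝟙_ C) : C) ◁ (coprod.inl : 𝟙_ C ⟶ _)) = (tensorLeft _).map coprod.inl from rfl]
  rw [h, coprod.inl_desc]

lemma whiskerLeft_inr_xorMap
    [IsIso (coprodComparison (tensorLeft ((𝟙_ C) ⨿ (𝟙_ C))) (𝟙_ C) (𝟙_ C))] :
    ((𝟙_ C) ⨿ (𝟙_ C) : C) ◁ (coprod.inr : 𝟙_ C ⟶ _) ≫ xorMap
      = (ρ_ _).hom ≫ negMap := by
  have h := map_inr_inv_coprodComparison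
    (F := tensorLeft ((𝟙_ C) ⨿ (𝟙_ C) : C)) (A := 𝟙_ C) (B := 𝟙_ C)
  rw [xorMap, ← Category.assoc]
  rw [show (((𝟙_ C) ⨿ (𝟙_ C) : C) ◁ (coprod.inr : 𝟙_ C ⟶ _)) = (tensorLeft _).map coprod.inr from rfl]
  rw [h, coprod.inr_desc]

/-- In a distributive Markov category (finite coproducts with deterministic
injections, preserved by tensoring), any two coinflips are equal. -/
theorem coinflip_unique
    (hdet : ∀ X Y : C, _root_.Deterministic (coprod.inl : X ⟶ X ⨿ Y) ∧
      _root_.Deterministic (coprod.inr : Y ⟶ X ⨿ Y))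
    (hdist : ∀ A X Y : C, IsIso (coprodComparison (tensorLeft A) X Y))
    (f₁ f₂ : 𝟙_ C ⟶ 𝟙_ C ⨿ 𝟙_ C) (h₁ : IsCoinflip f₁) (h₂ : IsCoinflip f₂) :
    f₁ = f₂ := by
  haveI instB := hdist ((𝟙_ C) ⨿ (𝟙_ C)) (𝟙_ C) (𝟙_ C)
  haveI instU := hdist (𝟙_ C) (𝟙_ C) (𝟙_ C)
  obtain ⟨hs₁, -⟩ := h₁
  obtain ⟨hs₂, -⟩ := h₂
  replace hs₁ : f₁ ≫ negMap = f₁ := hs₁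
  replace hs₂ : f₂ ≫ negMap = f₂ := hs₂
  -- any morphism `I ⟶ I ⨿ I` absorbed into a symmetric coinflip
  have absorb : ∀ f g : 𝟙_ C ⟶ (𝟙_ C) ⨿ (𝟙_ C), g ≫ negMap = g →
      f ≫ coprod.desc g (g ≫ negMap) = g := by
    intro f g hg
    rw [hg]
    have hdesc : coprod.desc g g
        = coprod.desc (𝟙 (𝟙_ C)) (𝟙 (𝟙_ C)) ≫ g := by
      apply coprod.hom_ext <;> simp
    rw [hdesc, ← Category.assoc,
      endo_unit_eq_id (f ≫ coprod.desc (𝟙 (𝟙_ C)) (𝟙 (𝟙_ C))), Category.id_comp]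
  -- evaluating xor with the first argument `f₁`
  have key1 : f₁ ▷ ((𝟙_ C) ⨿ (𝟙_ C)) ≫ xorMap
      = (λ_ _).hom ≫ coprod.desc f₁ (f₁ ≫ negMap) := by
    apply tensor_ext_left instU
    · rw [← Category.assoc, whisker_exchange, Category.assoc,
        whiskerLeft_inl_xorMap, rightUnitor_naturality,
        ← Category.assoc, leftUnitor_naturality, ← unitors_equal,
        Category.assoc, coprod.inl_desc]
    · rw [← Category.assoc, whisker_exchange, Category.assoc,
        whiskerLeft_inr_xorMap, ← Category.assoc, rightUnitor_naturality,
        ← Category.assoc, leftUnitor_naturality, ← unitors_equal,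
        Category.assoc, Category.assoc, coprod.inr_desc]
  -- evaluating xor on pure first arguments
  have pure_inl : (coprod.inl : 𝟙_ C ⟶ _) ▷ ((𝟙_ C) ⨿ (𝟙_ C)) ≫ xorMap
      = (λ_ _).hom := by
    apply tensor_ext_left instU
    · rw [← Category.assoc, whisker_exchange, Category.assoc,
        whiskerLeft_inl_xorMap, rightUnitor_naturality,
        leftUnitor_naturality, ← unitors_equal]
    · rw [← Category.assoc, whisker_exchange, Category.assoc,
        whiskerLeft_inr_xorMap, ← Category.assoc, rightUnitor_naturality,
        Category.assoc, inl_negMap, leftUnitor_naturality, ← unitors_equal]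
  have pure_inr : (coprod.inr : 𝟙_ C ⟶ _) ▷ ((𝟙_ C) ⨿ (𝟙_ C)) ≫ xorMap
      = (λ_ _).hom ≫ negMap := by
    apply tensor_ext_left instU
    · rw [← Category.assoc, whisker_exchange, Category.assoc,
        whiskerLeft_inl_xorMap, rightUnitor_naturality,
        ← Category.assoc, leftUnitor_naturality, ← unitors_equal,
        Category.assoc, inl_negMap]
    · rw [← Category.assoc, whisker_exchange, Category.assoc,
        whiskerLeft_inr_xorMap, ← Category.assoc, rightUnitor_naturality,
        Category.assoc, inr_negMap, ← Category.assoc, leftUnitor_naturality,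
        ← unitors_equal, Category.assoc, inr_negMap]
  -- evaluating xor with the second argument `f₂`
  have key2 : ((𝟙_ C) ⨿ (𝟙_ C)) ◁ f₂ ≫ xorMap
      = (ρ_ _).hom ≫ coprod.desc f₂ (f₂ ≫ negMap) := by
    apply tensor_ext_right instU
    · conv_lhs => rw [← Category.assoc, ← whisker_exchange, Category.assoc,
        pure_inl, leftUnitor_naturality]
      conv_rhs => rw [← Category.assoc, rightUnitor_naturality,
        Category.assoc, coprod.inl_desc]
      rw [unitors_equal]
    · conv_lhs => rw [← Category.assoc, ← whisker_exchange, Category.assoc,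
        pure_inr, MonoidalCategory.leftUnitor_naturality_assoc]
      conv_rhs => rw [← Category.assoc, rightUnitor_naturality,
        Category.assoc, coprod.inr_desc]
      rw [unitors_equal]
  -- the two sequential evaluations of `(f₁ ⊗ f₂) ≫ xorMap`
  have eval1 : (λ_ (𝟙_ C)).inv ≫ (f₁ ⊗ₘ f₂) ≫ xorMap
      = f₂ ≫ coprod.desc f₁ (f₁ ≫ negMap) := by
    rw [tensorHom_def']
    simp only [Category.assoc]
    rw [key1, MonoidalCategory.leftUnitor_naturality_assoc, Iso.inv_hom_id_assoc]
  have eval2 : (λ_ (𝟙_ C)).inv ≫ (f₁ ⊗ₘ f₂) ≫ xorMap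
      = f₁ ≫ coprod.desc f₂ (f₂ ≫ negMap) := by
    rw [MonoidalCategory.tensorHom_def]
    simp only [Category.assoc]
    rw [key2, MonoidalCategory.rightUnitor_naturality_assoc, ← unitors_equal,
      Iso.inv_hom_id_assoc]
  have e1 : f₂ ≫ coprod.desc f₁ (f₁ ≫ negMap) = f₁ := absorb f₂ f₁ hs₁
  have e2 : f₁ ≫ coprod.desc f₂ (f₂ ≫ negMap) = f₂ := absorb f₁ f₂ hs₂
  rw [← e1, ← eval1, eval2, e2]

end
end
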